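/- Let n ≥ 2, λ ∈ ℤ^n with λ₁ ≥ λ₂ ≥ … ≥ λₙ ≥ 0, and (ν, μ) ∈ τ_{Cₙ}(λ). Then there exists exactly one triple (c, t, i) where c ∈ ℤ with 0 ≤ c ≤ λ₁ − λ₂ and ν₁ = λ₁ − c, t is a nondecreasing finite list with entries in {2, …, n} such that νⱼ = λⱼ − (the number of entries of t equal to j) for every j with 2 ≤ j ≤ n, and i is a nonincreasing finite list with entries in {1, …, n−1} such that μⱼ = νⱼ + (the number of entries of i equal to j−1) for every j with 2 ≤ j ≤ n. In other words, every λ-admissible map of type Cₙ factors uniquely as ξ_{−t^{ℓ−c},+i^m} ∘ ξ_{−1}^c with ξ_{−t^{ℓ−c},+i^m} λc-admissible, where ξ_{−1} subtracts 1 from the first coordinate. -/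

import Mathlib

/-!
The triple is forced coordinatewise: `c = λ₁ - ν₁`, the list `t` must contain each `j ∈ [2, n]`
exactly `λⱼ - νⱼ` times and the list `i` each `j ∈ [1, n - 1]` exactly `μⱼ₊₁ - νⱼ₊₁` times;
the interleaving conditions make these multiplicities nonnegative. A sorted list is determined
by its multiset, and every multiset can be sorted, so each factor exists and is unique.
-/

theorem existsUnique_prod_and {α β : Type*} {p : α → Prop} {q : β → Prop}
    (hp : ∃! a, p a) (hq : ∃! b, q b) : ∃! x : α × β, p x.1 ∧ q x.2 := by
  obtain ⟨a, ha, ha_uniq⟩ := hp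
  obtain ⟨b, hb, hb_uniq⟩ := hq
  exact ⟨(a, b), ⟨ha, hb⟩, fun x hx => Prod.ext (ha_uniq _ hx.1) (hb_uniq _ hx.2)⟩

namespace List

variable {α : Type*} [DecidableEq α] (r : α → α → Prop) [DecidableRel r] [IsTrans α r]
  [Std.Antisymm r] [Std.Total r]

theorem existsUnique_pairwise_count (S : Finset α) (f : α → ℕ) :
    ∃! l : List α, l.Pairwise r ∧ (∀ x ∈ l, x ∈ S) ∧ ∀ x ∈ S, l.count x = f x := by
  set m : Multiset α := ∑ x ∈ S, Multiset.replicate (f x) x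
  have hm_count : ∀ a, m.count a = if a ∈ S then f a else 0 := fun a => by
    simp only [m, Multiset.count_sum', Multiset.count_replicate, Finset.sum_ite_eq']
  refine ⟨m.sort r, ⟨m.pairwise_sort r, fun x hx => ?_, fun x hx => ?_⟩, ?_⟩
  · rw [← Multiset.mem_coe, Multiset.sort_eq, ← Multiset.count_pos, hm_count] at hx
    by_contra hxS
    simp [hxS] at hx
  · rw [← Multiset.coe_count, Multiset.sort_eq, hm_count, if_pos hx]
  · rintro l ⟨hl_sorted, hl_mem, hl_count⟩
    refine (perm_iff_count.2 fun a => ?_).eq_of_pairwise' hl_sorted (m.pairwise_sort r)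
    rw [← Multiset.coe_count a (m.sort r), Multiset.sort_eq, hm_count]
    split_ifs with ha
    · exact hl_count a ha
    · exact count_eq_zero.2 fun h => ha (hl_mem a h)

end List

theorem existsUnique_sorted_list_sub_count (a b : ℕ) (l ν : ℕ → ℤ)
    (hν : ∀ j, a ≤ j → j ≤ b → ν j ≤ l j) :
    ∃! t : List ℕ, t.Pairwise (· ≤ ·) ∧ (∀ x ∈ t, a ≤ x ∧ x ≤ b) ∧
      ∀ j, a ≤ j → j ≤ b → ν j = l j - (t.count j : ℤ) := by
  refine (existsUnique_congr fun t => ?_).1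
    (List.existsUnique_pairwise_count (· ≤ ·) (Finset.Icc a b) fun j => (l j - ν j).toNat)
  simp only [Finset.mem_Icc, and_imp]
  refine and_congr_right' (and_congr_right' (forall₃_congr fun j hja hjb => ?_))
  have := hν j hja hjb
  omega

theorem existsUnique_antitone_list_add_count_pred (n : ℕ) (ν μ : ℕ → ℤ)
    (hμ : ∀ j, 2 ≤ j → j ≤ n → ν j ≤ μ j) :
    ∃! i : List ℕ, i.Pairwise (· ≥ ·) ∧ (∀ x ∈ i, 1 ≤ x ∧ x ≤ n - 1) ∧
      ∀ j, 2 ≤ j → j ≤ n → μ j = ν j + (i.count (j - 1) : ℤ) := by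
  refine (existsUnique_congr fun i => ?_).1
    (List.existsUnique_pairwise_count (· ≥ ·) (Finset.Icc 1 (n - 1))
      fun j => (μ (j + 1) - ν (j + 1)).toNat)
  simp only [Finset.mem_Icc, and_imp]
  refine and_congr_right' (and_congr_right' ⟨fun h j hj2 hjn => ?_, fun h j hj1 hjn => ?_⟩)
  · have := hμ j hj2 hjn
    have := h (j - 1) (by omega) (by omega)
    rw [Nat.sub_add_cancel (by omega)] at this
    omega
  · have := hμ (j + 1) (by omega) (by omega)
    have := h (j + 1) (by omega) (by omega)
    rw [Nat.add_sub_cancel] at this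
    omega

theorem stmt_11_general (n : ℕ) (hn : 2 ≤ n) (l ν μ : ℕ → ℤ)
    (h1 : ∀ j, 1 ≤ j → j ≤ n → ν j ≤ l j)
    (h2 : ∀ j, 1 ≤ j → j ≤ n - 1 → l (j + 1) ≤ ν j)
    (h5 : ∀ j, 2 ≤ j → j ≤ n → ν j ≤ μ j) :
    ∃! q : ℤ × List ℕ × List ℕ,
      (0 ≤ q.1 ∧ q.1 ≤ l 1 - l 2 ∧ ν 1 = l 1 - q.1) ∧
      (List.Pairwise (· ≤ ·) q.2.1 ∧ (∀ x ∈ q.2.1, 2 ≤ x ∧ x ≤ n) ∧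
        ∀ j, 2 ≤ j → j ≤ n → ν j = l j - (q.2.1.count j : ℤ)) ∧
      (List.Pairwise (· ≥ ·) q.2.2 ∧ (∀ x ∈ q.2.2, 1 ≤ x ∧ x ≤ n - 1) ∧
        ∀ j, 2 ≤ j → j ≤ n → μ j = ν j + (q.2.2.count (j - 1) : ℤ)) := by
  have hc : ∃! c : ℤ, 0 ≤ c ∧ c ≤ l 1 - l 2 ∧ ν 1 = l 1 - c := by
    have : ν 1 ≤ l 1 := h1 1 le_rfl (by omega)
    have : l 2 ≤ ν 1 := h2 1 le_rfl (by omega)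
    exact ⟨l 1 - ν 1, ⟨by omega, by omega, by ring⟩, fun c hc => by omega⟩
  exact existsUnique_prod_and hc <| existsUnique_prod_and
    (existsUnique_sorted_list_sub_count 2 n l ν fun j hj2 hjn => h1 j (by omega) hjn)
    (existsUnique_antitone_list_add_count_pred n ν μ h5)

/-- Unique factorization of λ-admissible maps in type Cₙ: every (ν, μ) ∈ τ_{Cₙ}(λ)
is realized by a unique triple (c, t, i) with 0 ≤ c ≤ λ₁ − λ₂ and ν₁ = λ₁ − c,
t a nondecreasing list with entries in {2, …, n} such that
νⱼ = λⱼ − #{entries of t equal to j} (2 ≤ j ≤ n), and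
i a nonincreasing list with entries in {1, …, n−1} such that
μⱼ = νⱼ + #{entries of i equal to j−1} (2 ≤ j ≤ n). -/
theorem stmt_11 (n : ℕ) (hn : 2 ≤ n) (l ν μ : ℕ → ℤ)
    (hdom : ∀ j, 1 ≤ j → j ≤ n - 1 → l (j + 1) ≤ l j) (hpos : 0 ≤ l n)
    (h1 : ∀ j, 1 ≤ j → j ≤ n → ν j ≤ l j)
    (h2 : ∀ j, 1 ≤ j → j ≤ n - 1 → l (j + 1) ≤ ν j)
    (h3 : 0 ≤ ν n)
    (h4 : ∀ j, 2 ≤ j → j ≤ n → μ j ≤ ν (j - 1))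
    (h5 : ∀ j, 2 ≤ j → j ≤ n → ν j ≤ μ j) :
    ∃! q : ℤ × List ℕ × List ℕ,
      (0 ≤ q.1 ∧ q.1 ≤ l 1 - l 2 ∧ ν 1 = l 1 - q.1) ∧
      (List.Pairwise (· ≤ ·) q.2.1 ∧ (∀ x ∈ q.2.1, 2 ≤ x ∧ x ≤ n) ∧
        ∀ j, 2 ≤ j → j ≤ n → ν j = l j - (q.2.1.count j : ℤ)) ∧
      (List.Pairwise (· ≥ ·) q.2.2 ∧ (∀ x ∈ q.2.2, 1 ≤ x ∧ x ≤ n - 1) ∧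
        ∀ j, 2 ≤ j → j ≤ n → μ j = ν j + (q.2.2.count (j - 1) : ℤ)) :=
  stmt_11_general n hn l ν μ h1 h2 h5
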